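/- With W_d as above, the renormalized quantity c^{-1} d^{1-H} W_d converges to 0 in L^2 as d → ∞, with E((d^{1-H}W_d)^2) ≤ C d^{1-2H} for H ∈ (1/2, 3/4), ≤ C log(d) d^{-1/2} for H = 3/4, and ≤ C d^{2H-2} for H ∈ (3/4, 1). -/

import Mathlib

open MeasureTheory ProbabilityTheory Finset Filter

/-!
Expanding the square and using independence, `E[(∑_{k<d} ΔZ¹_k ΔZ²_k)²] = ∑_{k,l<d} ρ_H(k-l)²`.
Convexity of `x ↦ x^{2H}` gives `0 ≤ ρ_H(m) ≤ 2 (m+1)^{2H-2}`, so the double sum is at most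
`8d ∑_{r<d} (r+1)^{4H-4} ≤ 8d (1 + ∫_1^d x^{4H-4} dx)`. The three regimes are those of this
integral: bounded, `log d`, or of order `d^{4H-3}`, according as `4H - 4` is below, equal to or
above `-1`.
-/

lemma mul_rpow_sub_one_le_rpow {q x y : ℝ} (hq : q ≤ 1) (hx : 0 ≤ x) (hxy : x ≤ y) :
    x * y ^ (q - 1) ≤ x ^ q := by
  rcases hx.eq_or_lt with rfl | hx
  · simpa using Real.rpow_nonneg le_rfl q
  calc x * y ^ (q - 1) ≤ x * x ^ (q - 1) :=
        mul_le_mul_of_nonneg_left (Real.rpow_le_rpow_of_nonpos hx hxy (by linarith)) hx.le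
    _ = x ^ q := by rw [Real.rpow_sub_one hx.ne', mul_div_cancel₀ _ hx.ne']

noncomputable def fbmCov (H s t : ℝ) : ℝ :=
  (s ^ (2 * H) + t ^ (2 * H) - |s - t| ^ (2 * H)) / 2

/-- `ρ_H(a)`: the covariance of two unit increments of fractional Brownian motion at lag `a`. -/
noncomputable def fgnCov (H a : ℝ) : ℝ :=
  (|a + 1| ^ (2 * H) + |a - 1| ^ (2 * H) - 2 * |a| ^ (2 * H)) / 2

lemma fbmCov_increment (H : ℝ) (k l : ℕ) :
    fbmCov H ↑(k + 1) ↑(l + 1) - fbmCov H ↑(k + 1) l - fbmCov H k ↑(l + 1) + fbmCov H k l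
      = fgnCov H ((k : ℝ) - l) := by
  simp only [fbmCov, fgnCov]
  push_cast
  ring_nf

lemma fgnCov_neg (H a : ℝ) : fgnCov H (-a) = fgnCov H a := by
  rw [fgnCov, fgnCov, show -a + 1 = -(a - 1) by ring, show -a - 1 = -(a + 1) by ring,
    abs_neg, abs_neg, abs_neg]
  ring

lemma fgnCov_natCast_sub_natCast (H : ℝ) (k l : ℕ) :
    fgnCov H ((k : ℝ) - l) = fgnCov H (Nat.dist k l) := by
  rcases le_total l k with h | h
  · rw [Nat.dist_eq_sub_of_le_right h, Nat.cast_sub h]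
  · rw [Nat.dist_eq_sub_of_le h, Nat.cast_sub h, ← fgnCov_neg, neg_sub]

lemma fgnCov_zero {H : ℝ} (hH : 0 < H) : fgnCov H 0 = 1 := by
  simp [fgnCov, Real.zero_rpow (by positivity : 2 * H ≠ 0)]

lemma two_mul_fgnCov_of_one_le (H : ℝ) {r : ℝ} (hr : 1 ≤ r) :
    2 * fgnCov H r = ((r + 1) ^ (2 * H) - r ^ (2 * H)) - (r ^ (2 * H) - (r - 1) ^ (2 * H)) := by
  rw [fgnCov, abs_of_nonneg (by linarith), abs_of_nonneg (by linarith),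
    abs_of_nonneg (by linarith)]
  ring

lemma fgnCov_nonneg_of_one_le {H r : ℝ} (hH : 1 / 2 ≤ H) (hr : 1 ≤ r) : 0 ≤ fgnCov H r := by
  have := (convexOn_rpow (by linarith : 1 ≤ 2 * H)).slope_mono_adjacent
    (Set.mem_Ici.2 (by linarith : (0 : ℝ) ≤ r - 1)) (Set.mem_Ici.2 (by linarith : (0 : ℝ) ≤ r + 1))
    (sub_one_lt r) (lt_add_one r)
  simp only [sub_sub_cancel, add_sub_cancel_left, div_one] at this
  linarith [two_mul_fgnCov_of_one_le H hr]

lemma fgnCov_le_of_one_le {H r : ℝ} (hH : 1 / 2 ≤ H) (hH1 : H ≤ 1) (hr : 1 ≤ r) :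
    fgnCov H r ≤ 2 * (r + 1) ^ (2 * H - 2) := by
  have hconv := convexOn_rpow (by linarith : 1 ≤ 2 * H)
  -- tangent lines at `r + 1` and `r - 1` bound the two chords of length one
  have hright := hconv.slope_le_of_hasDerivAt (x := r) (y := r + 1) (Set.mem_Ici.2 (by linarith))
    (Set.mem_Ici.2 (by linarith)) (lt_add_one r)
    (Real.hasDerivAt_rpow_const (Or.inr (by linarith : 1 ≤ 2 * H)))
  have hleft := hconv.le_slope_of_hasDerivAt (x := r - 1) (y := r) (Set.mem_Ici.2 (by linarith))
    (Set.mem_Ici.2 (by linarith)) (sub_one_lt r)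
    (Real.hasDerivAt_rpow_const (Or.inr (by linarith : 1 ≤ 2 * H)))
  simp only [slope_def_field, sub_sub_cancel, add_sub_cancel_left, div_one] at hright hleft
  -- `(r+1)^{2H-1} - (r-1)^{2H-1} ≤ 2 (r+1)^{2H-2}` because `x ↦ x^{2H-2}` is decreasing
  have hq := mul_rpow_sub_one_le_rpow (q := 2 * H - 1) (by linarith)
    (by linarith : (0 : ℝ) ≤ r - 1) (by linarith : r - 1 ≤ r + 1)
  rw [show 2 * H - 1 - 1 = 2 * H - 2 by ring] at hq
  have hsplit : (r + 1) ^ (2 * H - 1) = (r + 1) * (r + 1) ^ (2 * H - 2) := by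
    rw [show 2 * H - 1 = 2 * H - 2 + 1 by ring, Real.rpow_add_one (by linarith), mul_comm]
  have hpos : 0 ≤ (r + 1) ^ (2 * H - 2) := Real.rpow_nonneg (by linarith) _
  nlinarith [two_mul_fgnCov_of_one_le H hr]

lemma fgnCov_natCast_sq_le {H : ℝ} (hH : 1 / 2 ≤ H) (hH1 : H ≤ 1) (m : ℕ) :
    fgnCov H m ^ 2 ≤ 4 * ((m : ℝ) + 1) ^ (4 * H - 4) := by
  have hsq : ((m : ℝ) + 1) ^ (4 * H - 4) = (((m : ℝ) + 1) ^ (2 * H - 2)) ^ 2 := by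
    rw [← Real.rpow_mul_natCast (by positivity)]
    ring_nf
  obtain ⟨hlow, hup⟩ : 0 ≤ fgnCov H m ∧ fgnCov H m ≤ 2 * ((m : ℝ) + 1) ^ (2 * H - 2) := by
    rcases Nat.eq_zero_or_pos m with rfl | hm
    · simp [fgnCov_zero (by linarith : 0 < H)]
    · have hm' : (1 : ℝ) ≤ m := by exact_mod_cast hm
      exact ⟨fgnCov_nonneg_of_one_le hH hm', fgnCov_le_of_one_le hH hH1 hm'⟩
  rw [hsq]
  nlinarith

lemma sum_range_dist_le {b : ℕ → ℝ} (hb : ∀ r, 0 ≤ b r) {d k : ℕ} (hk : k < d) :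
    ∑ l ∈ range d, b (Nat.dist k l) ≤ 2 * ∑ r ∈ range d, b r := by
  -- `l ↦ dist k l` is injective on each side of `k`
  have side : ∀ s ⊆ range d, Set.InjOn (Nat.dist k) s →
      ∑ l ∈ s, b (Nat.dist k l) ≤ ∑ r ∈ range d, b r := by
    intro s hs hinj
    rw [← sum_image hinj]
    refine sum_le_sum_of_subset_of_nonneg (fun r hr => ?_) fun r _ _ => hb r
    obtain ⟨l, hl, rfl⟩ := mem_image.1 hr
    have := mem_range.1 (hs hl)
    simp only [Nat.dist, mem_range]
    omega
  rw [← sum_filter_add_sum_filter_not (range d) (· ≤ k), two_mul]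
  refine add_le_add (side _ (filter_subset _ _) fun l hl l' hl' h => ?_)
    (side _ (filter_subset _ _) fun l hl l' hl' h => ?_) <;>
  · simp only [coe_filter, Set.mem_ofPred_eq, Nat.dist] at hl hl' h
    omega

lemma sum_range_sum_range_dist_le {b : ℕ → ℝ} (hb : ∀ r, 0 ≤ b r) (d : ℕ) :
    ∑ k ∈ range d, ∑ l ∈ range d, b (Nat.dist k l) ≤ 2 * d * ∑ r ∈ range d, b r := by
  calc ∑ k ∈ range d, ∑ l ∈ range d, b (Nat.dist k l)
      ≤ ∑ _k ∈ range d, 2 * ∑ r ∈ range d, b r :=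
        sum_le_sum fun k hk => sum_range_dist_le hb (mem_range.1 hk)
    _ = 2 * d * ∑ r ∈ range d, b r := by rw [sum_const, card_range, nsmul_eq_mul]; ring

lemma sum_range_rpow_le_one_add_integral {p : ℝ} (hp : p ≤ 0) {d : ℕ} (hd : 1 ≤ d) :
    ∑ r ∈ range d, ((r : ℝ) + 1) ^ p ≤ 1 + ∫ x in (1 : ℝ)..d, x ^ p := by
  have hanti : AntitoneOn (fun x : ℝ => x ^ p) (Set.Icc (1 : ℕ) d) := fun x hx y _ hxy =>
    Real.rpow_le_rpow_of_nonpos (by simp only [Set.mem_Icc, Nat.cast_one] at hx; linarith) hxy hp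
  have := hanti.sum_le_integral_Ico hd
  rw [range_eq_Ico, sum_eq_sum_Ico_succ_bot (by omega)]
  push_cast at this ⊢
  simpa using this

lemma sum_sum_fgnCov_sq_le {H : ℝ} (hH : 1 / 2 ≤ H) (hH1 : H ≤ 1) {d : ℕ} (hd : 1 ≤ d) :
    ∑ k ∈ range d, ∑ l ∈ range d, fgnCov H ((k : ℝ) - l) ^ 2
      ≤ 8 * d * (1 + ∫ x in (1 : ℝ)..d, x ^ (4 * H - 4)) := by
  simp_rw [fgnCov_natCast_sub_natCast]
  calc ∑ k ∈ range d, ∑ l ∈ range d, fgnCov H (Nat.dist k l) ^ 2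
      ≤ 2 * d * ∑ r ∈ range d, fgnCov H r ^ 2 :=
        sum_range_sum_range_dist_le (fun r => sq_nonneg (fgnCov H r)) d
    _ ≤ 2 * d * ∑ r ∈ range d, 4 * ((r : ℝ) + 1) ^ (4 * H - 4) := by
        gcongr with r
        exact fgnCov_natCast_sq_le hH hH1 r
    _ ≤ 8 * d * (1 + ∫ x in (1 : ℝ)..d, x ^ (4 * H - 4)) := by
        rw [← mul_sum]
        have := sum_range_rpow_le_one_add_integral (by linarith : 4 * H - 4 ≤ 0) hd
        have : (0 : ℝ) ≤ d := d.cast_nonneg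
        nlinarith

lemma integral_one_rpow_le_of_lt_neg_one {p b : ℝ} (hp : p < -1) (hb : 1 ≤ b) :
    ∫ x in (1 : ℝ)..b, x ^ p ≤ 1 / (-1 - p) := by
  have hq : 0 < -1 - p := by linarith
  rw [integral_rpow (Or.inr ⟨hp.ne, by simp [Set.uIcc_of_le hb]⟩), Real.one_rpow,
    div_le_iff_of_neg (by linarith), one_div_mul_eq_div,
    show (p + 1) / (-1 - p) = -1 by rw [div_eq_iff hq.ne']; ring]
  linarith [Real.rpow_nonneg (by linarith : (0 : ℝ) ≤ b) (p + 1)]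

lemma integral_one_rpow_neg_one {b : ℝ} (hb : 0 < b) :
    ∫ x in (1 : ℝ)..b, x ^ (-1 : ℝ) = Real.log b := by
  simp_rw [Real.rpow_neg_one]
  rw [integral_inv_of_pos one_pos hb, div_one]

lemma integral_one_rpow_le_of_neg_one_lt {p : ℝ} (hp : -1 < p) (b : ℝ) :
    ∫ x in (1 : ℝ)..b, x ^ p ≤ b ^ (p + 1) / (p + 1) := by
  rw [integral_rpow (Or.inl hp), Real.one_rpow]
  gcongr
  · linarith
  · linarith

lemma tendsto_natCast_rpow_atTop_zero {p : ℝ} (hp : p < 0) :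
    Tendsto (fun d : ℕ => (d : ℝ) ^ p) atTop (nhds 0) := by
  rw [← neg_neg p]
  exact (tendsto_rpow_neg_atTop (neg_pos.2 hp)).comp tendsto_natCast_atTop_atTop

lemma tendsto_log_natCast_mul_rpow_neg_half :
    Tendsto (fun d : ℕ => Real.log d * (d : ℝ) ^ (-(1 / 2) : ℝ)) atTop (nhds 0) := by
  have h : Tendsto (fun x : ℝ => Real.log x * x ^ (-(1 / 2) : ℝ)) atTop (nhds 0) := by
    refine (isLittleO_log_rpow_atTop one_half_pos).tendsto_div_nhds_zero.congr' ?_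
    filter_upwards [eventually_gt_atTop 0] with x hx
    rw [Real.rpow_neg hx.le, div_eq_mul_inv]
  exact h.comp tendsto_natCast_atTop_atTop

noncomputable def renormalizedMomentBound (H : ℝ) (d : ℕ) : ℝ :=
  (d : ℝ) ^ (1 - 2 * H) * (1 + ∫ x in (1 : ℝ)..d, x ^ (4 * H - 4))

lemma renormalizedMomentBound_nonneg (H : ℝ) {d : ℕ} (hd : 1 ≤ d) :
    0 ≤ renormalizedMomentBound H d := by
  have hd' : (1 : ℝ) ≤ d := by exact_mod_cast hd
  have := intervalIntegral.integral_nonneg (μ := volume) hd' fun x hx =>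
    Real.rpow_nonneg (by linarith [hx.1] : (0 : ℝ) ≤ x) (4 * H - 4)
  unfold renormalizedMomentBound
  positivity

lemma renormalizedMomentBound_le_of_lt {H : ℝ} (hH : H < 3 / 4) {d : ℕ} (hd : 1 ≤ d) :
    renormalizedMomentBound H d ≤ (1 + 1 / (3 - 4 * H)) * (d : ℝ) ^ (1 - 2 * H) := by
  have hI := integral_one_rpow_le_of_lt_neg_one (by linarith : 4 * H - 4 < -1)
    (by exact_mod_cast hd : (1 : ℝ) ≤ d)
  rw [show -1 - (4 * H - 4) = 3 - 4 * H by ring] at hI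
  rw [renormalizedMomentBound, mul_comm]
  gcongr

lemma renormalizedMomentBound_three_quarters_le {d : ℕ} (hd : 2 ≤ d) :
    renormalizedMomentBound (3 / 4) d ≤ 3 * Real.log d * (d : ℝ) ^ (-(1 / 2) : ℝ) := by
  have hd' : (2 : ℝ) ≤ d := by exact_mod_cast hd
  have hlog : 1 / 2 ≤ Real.log d :=
    (Real.log_two_gt_d9.trans_le (Real.log_le_log two_pos hd')).le.trans' (by norm_num)
  rw [renormalizedMomentBound, show (4 * (3 / 4) - 4 : ℝ) = -1 by norm_num,
    integral_one_rpow_neg_one (by linarith), show (1 - 2 * (3 / 4) : ℝ) = -(1 / 2) by norm_num,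
    mul_comm]
  gcongr
  linarith

lemma renormalizedMomentBound_le_of_gt {H : ℝ} (hH : 3 / 4 < H) {d : ℕ} (hd : 1 ≤ d) :
    renormalizedMomentBound H d ≤ (1 + 1 / (4 * H - 3)) * (d : ℝ) ^ (2 * H - 2) := by
  have hd' : (1 : ℝ) ≤ d := by exact_mod_cast hd
  have hI := integral_one_rpow_le_of_neg_one_lt (by linarith : -1 < 4 * H - 4) (d : ℝ)
  rw [show 4 * H - 4 + 1 = 4 * H - 3 by ring] at hI
  have hpow : (d : ℝ) ^ (1 - 2 * H) * (d : ℝ) ^ (4 * H - 3) = (d : ℝ) ^ (2 * H - 2) := by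
    rw [← Real.rpow_add (by linarith)]; ring_nf
  have hle : (d : ℝ) ^ (1 - 2 * H) ≤ (d : ℝ) ^ (2 * H - 2) :=
    Real.rpow_le_rpow_of_exponent_le hd' (by linarith)
  calc renormalizedMomentBound H d
      ≤ (d : ℝ) ^ (1 - 2 * H) * (1 + (d : ℝ) ^ (4 * H - 3) / (4 * H - 3)) := by
        unfold renormalizedMomentBound; gcongr
    _ = (d : ℝ) ^ (1 - 2 * H) + 1 / (4 * H - 3) * (d : ℝ) ^ (2 * H - 2) := by
        rw [← hpow]; ring
    _ ≤ (1 + 1 / (4 * H - 3)) * (d : ℝ) ^ (2 * H - 2) := by linarith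

lemma tendsto_renormalizedMomentBound {H : ℝ} (hH1 : 1 / 2 < H) (hH2 : H < 1) :
    Tendsto (renormalizedMomentBound H) atTop (nhds 0) := by
  have hnonneg : ∀ᶠ d in atTop, 0 ≤ renormalizedMomentBound H d :=
    eventually_ge_atTop 1 |>.mono fun d hd => renormalizedMomentBound_nonneg H hd
  rcases lt_trichotomy H (3 / 4) with hH | rfl | hH
  · refine squeeze_zero' hnonneg ((eventually_ge_atTop 1).mono fun d hd =>
      renormalizedMomentBound_le_of_lt hH hd) ?_
    simpa using (tendsto_natCast_rpow_atTop_zero (by linarith : 1 - 2 * H < 0)).const_mul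
      (1 + 1 / (3 - 4 * H))
  · refine squeeze_zero' hnonneg ((eventually_ge_atTop 2).mono fun d hd =>
      renormalizedMomentBound_three_quarters_le hd) ?_
    simpa [mul_assoc] using tendsto_log_natCast_mul_rpow_neg_half.const_mul 3
  · refine squeeze_zero' hnonneg ((eventually_ge_atTop 1).mono fun d hd =>
      renormalizedMomentBound_le_of_gt hH hd) ?_
    simpa using (tendsto_natCast_rpow_atTop_zero (by linarith : 2 * H - 2 < 0)).const_mul
      (1 + 1 / (4 * H - 3))

lemma exists_renormalizedMomentBound_le (H : ℝ) : ∃ K, 0 < K ∧ ∀ d : ℕ, 2 ≤ d →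
    (H < 3 / 4 → renormalizedMomentBound H d ≤ K * (d : ℝ) ^ (1 - 2 * H))
    ∧ (H = 3 / 4 → renormalizedMomentBound H d ≤ K * Real.log d * (d : ℝ) ^ (-(1 / 2) : ℝ))
    ∧ (3 / 4 < H → renormalizedMomentBound H d ≤ K * (d : ℝ) ^ (2 * H - 2)) := by
  rcases lt_trichotomy H (3 / 4) with hH | rfl | hH
  · have : 0 < 3 - 4 * H := by linarith
    exact ⟨1 + 1 / (3 - 4 * H), by positivity, fun d hd =>
      ⟨fun _ => renormalizedMomentBound_le_of_lt hH (by omega), fun h => absurd h hH.ne,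
        fun h => absurd h hH.not_gt⟩⟩
  · exact ⟨3, by norm_num, fun d hd =>
      ⟨fun h => absurd h (lt_irrefl _), fun _ => renormalizedMomentBound_three_quarters_le hd,
        fun h => absurd h (lt_irrefl _)⟩⟩
  · have : 0 < 4 * H - 3 := by linarith
    exact ⟨1 + 1 / (4 * H - 3), by positivity, fun d hd =>
      ⟨fun h => absurd h hH.not_gt, fun h => absurd h hH.ne',
        fun _ => renormalizedMomentBound_le_of_gt hH (by omega)⟩⟩

section
variable {Ω : Type*} [MeasurableSpace Ω] {μ : Measure Ω}

lemma integral_sq_sum_mul_of_indepFun {ι : Type*} {X Y : ι → Ω → ℝ}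
    (hX : ∀ i, MemLp (X i) 2 μ) (hY : ∀ i, MemLp (Y i) 2 μ)
    (hXY : IndepFun (fun ω i => X i ω) (fun ω i => Y i ω) μ) (s : Finset ι) :
    ∫ ω, (∑ i ∈ s, X i ω * Y i ω) ^ 2 ∂μ
      = ∑ i ∈ s, ∑ j ∈ s, (∫ ω, X i ω * X j ω ∂μ) * ∫ ω, Y i ω * Y j ω ∂μ := by
  have hindep : ∀ i j, IndepFun (fun ω => X i ω * X j ω) (fun ω => Y i ω * Y j ω) μ :=
    fun i j => hXY.comp ((measurable_pi_apply i).mul (measurable_pi_apply j))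
      ((measurable_pi_apply i).mul (measurable_pi_apply j))
  have hXint : ∀ i j, Integrable (fun ω => X i ω * X j ω) μ :=
    fun i j => (hX i).integrable_mul (hX j)
  have hYint : ∀ i j, Integrable (fun ω => Y i ω * Y j ω) μ :=
    fun i j => (hY i).integrable_mul (hY j)
  have hint : ∀ i j, Integrable (fun ω => X i ω * Y i ω * (X j ω * Y j ω)) μ := fun i j =>
    ((hindep i j).integrable_mul (hXint i j) (hYint i j)).congr
      (ae_of_all _ fun ω => by simp only [Pi.mul_apply]; ring)
  simp_rw [sq, sum_mul_sum]
  rw [integral_finsetSum _ fun i _ => integrable_finsetSum _ fun j _ => hint i j]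
  refine sum_congr rfl fun i _ => ?_
  rw [integral_finsetSum _ fun j _ => hint i j]
  refine sum_congr rfl fun j _ => ?_
  rw [← (hindep i j).integral_fun_mul_eq_mul_integral (hXint i j).1 (hYint i j).1]
  congr 1 with ω
  ring

lemma integral_increment_mul_increment {Z : ℕ → Ω → ℝ} {R : ℕ → ℕ → ℝ}
    (hL2 : ∀ t, MemLp (Z t) 2 μ) (hcov : ∀ s t, ∫ ω, Z t ω * Z s ω ∂μ = R t s) (k l : ℕ) :
    ∫ ω, (Z (k + 1) ω - Z k ω) * (Z (l + 1) ω - Z l ω) ∂μ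
      = R (k + 1) (l + 1) - R (k + 1) l - R k (l + 1) + R k l := by
  have hint : ∀ a b, Integrable (fun ω => Z a ω * Z b ω) μ :=
    fun a b => (hL2 a).integrable_mul (hL2 b)
  simp only [mul_sub, sub_mul]
  rw [integral_sub, integral_sub, integral_sub, hcov, hcov, hcov, hcov]
  · ring
  all_goals first | exact hint _ _ | exact (hint _ _).sub (hint _ _)

lemma integral_sq_sum_increments_mul {H : ℝ} {Z1 Z2 : ℕ → Ω → ℝ}
    (hL2_1 : ∀ t, MemLp (Z1 t) 2 μ) (hL2_2 : ∀ t, MemLp (Z2 t) 2 μ)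
    (hcov1 : ∀ s t : ℕ, ∫ ω, Z1 t ω * Z1 s ω ∂μ = fbmCov H t s)
    (hcov2 : ∀ s t : ℕ, ∫ ω, Z2 t ω * Z2 s ω ∂μ = fbmCov H t s)
    (hindep : IndepFun (fun ω t => Z1 t ω) (fun ω t => Z2 t ω) μ) (d : ℕ) :
    ∫ ω, (∑ k ∈ range d, (Z1 (k + 1) ω - Z1 k ω) * (Z2 (k + 1) ω - Z2 k ω)) ^ 2 ∂μ
      = ∑ k ∈ range d, ∑ l ∈ range d, fgnCov H ((k : ℝ) - l) ^ 2 := by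
  have hΔ : Measurable fun (u : ℕ → ℝ) (k : ℕ) => u (k + 1) - u k :=
    measurable_pi_lambda _ fun k => (measurable_pi_apply _).sub (measurable_pi_apply _)
  rw [integral_sq_sum_mul_of_indepFun (X := fun k ω => Z1 (k + 1) ω - Z1 k ω)
    (Y := fun k ω => Z2 (k + 1) ω - Z2 k ω) (fun k => (hL2_1 _).sub (hL2_1 k))
    (fun k => (hL2_2 _).sub (hL2_2 k)) (hindep.comp hΔ hΔ)]
  simp_rw [integral_increment_mul_increment hL2_1 hcov1,
    integral_increment_mul_increment hL2_2 hcov2, fbmCov_increment, sq]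

lemma integral_sq_rescaled_sum_increments_mul_le {H : ℝ} (hH : 1 / 2 ≤ H) (hH1 : H ≤ 1)
    {Z1 Z2 : ℕ → Ω → ℝ}
    (hL2_1 : ∀ t, MemLp (Z1 t) 2 μ) (hL2_2 : ∀ t, MemLp (Z2 t) 2 μ)
    (hcov1 : ∀ s t : ℕ, ∫ ω, Z1 t ω * Z1 s ω ∂μ = fbmCov H t s)
    (hcov2 : ∀ s t : ℕ, ∫ ω, Z2 t ω * Z2 s ω ∂μ = fbmCov H t s)
    (hindep : IndepFun (fun ω t => Z1 t ω) (fun ω t => Z2 t ω) μ) {d : ℕ} (hd : 1 ≤ d) :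
    ∫ ω, ((d : ℝ) ^ (1 - H) * ((1 / (d : ℝ)) *
        ∑ k ∈ range d, (Z1 (k + 1) ω - Z1 k ω) * (Z2 (k + 1) ω - Z2 k ω))) ^ 2 ∂μ
      ≤ 8 * renormalizedMomentBound H d := by
  have hx : (0 : ℝ) < d := by exact_mod_cast hd
  have hscale : ((d : ℝ) ^ (1 - H) * (1 / d)) ^ 2 * d = (d : ℝ) ^ (1 - 2 * H) := by
    rw [mul_one_div, ← Real.rpow_sub_one hx.ne', ← Real.rpow_mul_natCast hx.le,
      ← Real.rpow_add_one hx.ne']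
    ring_nf
  simp_rw [← mul_assoc, mul_pow]
  rw [integral_const_mul, integral_sq_sum_increments_mul hL2_1 hL2_2 hcov1 hcov2 hindep]
  calc _ ≤ ((d : ℝ) ^ (1 - H)) ^ 2 * (1 / d) ^ 2
          * (8 * d * (1 + ∫ x in (1 : ℝ)..d, x ^ (4 * H - 4))) := by
        gcongr
        exact sum_sum_fgnCov_sq_le hH hH1 hd
    _ = 8 * renormalizedMomentBound H d := by
        rw [renormalizedMomentBound, ← hscale]
        ring

end

theorem renormalized_offdiagonal_to_zero_general
    {Ω : Type*} [MeasurableSpace Ω] (μ : Measure Ω)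
    (H : ℝ) (hH1 : 1 / 2 < H) (hH2 : H < 1) (c : ℝ)
    (Z1 Z2 : ℕ → Ω → ℝ)
    (hL2_1 : ∀ t, MemLp (Z1 t) 2 μ) (hL2_2 : ∀ t, MemLp (Z2 t) 2 μ)
    (hcov1 : ∀ s t : ℕ, ∫ ω, Z1 t ω * Z1 s ω ∂μ
      = ((t : ℝ) ^ (2 * H) + (s : ℝ) ^ (2 * H) - |(t : ℝ) - s| ^ (2 * H)) / 2)
    (hcov2 : ∀ s t : ℕ, ∫ ω, Z2 t ω * Z2 s ω ∂μ
      = ((t : ℝ) ^ (2 * H) + (s : ℝ) ^ (2 * H) - |(t : ℝ) - s| ^ (2 * H)) / 2)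
    (hindep : IndepFun (fun ω => (fun t : ℕ => Z1 t ω))
      (fun ω => (fun t : ℕ => Z2 t ω)) μ)
    (W : ℕ → Ω → ℝ)
    (hW : ∀ d ω, W d ω = (1 / (d : ℝ)) * ∑ k ∈ range d,
      (Z1 (k + 1) ω - Z1 k ω) * (Z2 (k + 1) ω - Z2 k ω)) :
    Tendsto (fun d : ℕ =>
        ∫ ω, (c⁻¹ * (d : ℝ) ^ (1 - H) * W d ω) ^ 2 ∂μ) atTop (nhds 0)
    ∧ ∃ C : ℝ, 0 < C ∧ ∀ d : ℕ, 2 ≤ d →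
        ((H < 3 / 4 →
            ∫ ω, ((d : ℝ) ^ (1 - H) * W d ω) ^ 2 ∂μ ≤ C * (d : ℝ) ^ (1 - 2 * H))
          ∧ (H = 3 / 4 →
            ∫ ω, ((d : ℝ) ^ (1 - H) * W d ω) ^ 2 ∂μ
              ≤ C * Real.log d * (d : ℝ) ^ (-(1 / 2) : ℝ))
          ∧ (3 / 4 < H →
            ∫ ω, ((d : ℝ) ^ (1 - H) * W d ω) ^ 2 ∂μ ≤ C * (d : ℝ) ^ (2 * H - 2))) := by
  have hmoment : ∀ d : ℕ, 1 ≤ d →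
      ∫ ω, ((d : ℝ) ^ (1 - H) * W d ω) ^ 2 ∂μ ≤ 8 * renormalizedMomentBound H d := fun d hd => by
    simp_rw [hW]
    exact integral_sq_rescaled_sum_increments_mul_le hH1.le hH2.le hL2_1 hL2_2 hcov1 hcov2
      hindep hd
  obtain ⟨K, hK, hrate⟩ := exists_renormalizedMomentBound_le H
  refine ⟨?_, 8 * K, by positivity, fun d hd => ?_⟩
  · refine squeeze_zero' (Eventually.of_forall fun d => integral_nonneg fun ω => sq_nonneg _)
      ((eventually_ge_atTop 1).mono fun d hd => ?_)
      (by simpa using ((tendsto_renormalizedMomentBound hH1 hH2).const_mul 8).const_mul (c⁻¹ ^ 2))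
    simp_rw [mul_assoc c⁻¹, mul_pow c⁻¹]
    rw [integral_const_mul]
    exact mul_le_mul_of_nonneg_left (hmoment d hd) (sq_nonneg _)
  · obtain ⟨h₁, h₂, h₃⟩ := hrate d hd
    have := hmoment d (by omega)
    exact ⟨fun h => by linarith [h₁ h], fun h => by linarith [h₂ h], fun h => by linarith [h₃ h]⟩

/-- With `W_d = (1/d) ∑_{k=0}^{d-1} (Z¹_{k+1}-Z¹_k)(Z²_{k+1}-Z²_k)` for two
independent centered processes with the fBm covariance with Hurst parameter
`H ∈ (1/2,1)`, the renormalized quantity `c⁻¹ d^{1-H} W_d` converges to `0` in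
`L²` as `d → ∞`, with `E((d^{1-H}W_d)²) ≤ C d^{1-2H}` for `H ∈ (1/2, 3/4)`,
`≤ C log(d) d^{-1/2}` for `H = 3/4`, and `≤ C d^{2H-2}` for `H ∈ (3/4, 1)`. -/
theorem renormalized_offdiagonal_to_zero
    {Ω : Type*} [MeasurableSpace Ω] (μ : Measure Ω) [IsProbabilityMeasure μ]
    (H : ℝ) (hH1 : 1 / 2 < H) (hH2 : H < 1) (c : ℝ) (hc : 0 < c)
    (Z1 Z2 : ℕ → Ω → ℝ)
    (hmeas1 : ∀ t, Measurable (Z1 t)) (hmeas2 : ∀ t, Measurable (Z2 t))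
    (hL2_1 : ∀ t, MemLp (Z1 t) 2 μ) (hL2_2 : ∀ t, MemLp (Z2 t) 2 μ)
    (hcent1 : ∀ t, ∫ ω, Z1 t ω ∂μ = 0) (hcent2 : ∀ t, ∫ ω, Z2 t ω ∂μ = 0)
    (hcov1 : ∀ s t : ℕ, ∫ ω, Z1 t ω * Z1 s ω ∂μ
      = ((t : ℝ) ^ (2 * H) + (s : ℝ) ^ (2 * H) - |(t : ℝ) - s| ^ (2 * H)) / 2)
    (hcov2 : ∀ s t : ℕ, ∫ ω, Z2 t ω * Z2 s ω ∂μ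
      = ((t : ℝ) ^ (2 * H) + (s : ℝ) ^ (2 * H) - |(t : ℝ) - s| ^ (2 * H)) / 2)
    (hindep : IndepFun (fun ω => (fun t : ℕ => Z1 t ω))
      (fun ω => (fun t : ℕ => Z2 t ω)) μ)
    (W : ℕ → Ω → ℝ)
    (hW : ∀ d ω, W d ω = (1 / (d : ℝ)) * ∑ k ∈ range d,
      (Z1 (k + 1) ω - Z1 k ω) * (Z2 (k + 1) ω - Z2 k ω)) :
    Tendsto (fun d : ℕ =>
        ∫ ω, (c⁻¹ * (d : ℝ) ^ (1 - H) * W d ω) ^ 2 ∂μ) atTop (nhds 0)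
    ∧ ∃ C : ℝ, 0 < C ∧ ∀ d : ℕ, 2 ≤ d →
        ((H < 3 / 4 →
            ∫ ω, ((d : ℝ) ^ (1 - H) * W d ω) ^ 2 ∂μ ≤ C * (d : ℝ) ^ (1 - 2 * H))
          ∧ (H = 3 / 4 →
            ∫ ω, ((d : ℝ) ^ (1 - H) * W d ω) ^ 2 ∂μ
              ≤ C * Real.log d * (d : ℝ) ^ (-(1 / 2) : ℝ))
          ∧ (3 / 4 < H →
            ∫ ω, ((d : ℝ) ^ (1 - H) * W d ω) ^ 2 ∂μ ≤ C * (d : ℝ) ^ (2 * H - 2))) :=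
  renormalized_offdiagonal_to_zero_general μ H hH1 hH2 c Z1 Z2 hL2_1 hL2_2 hcov1 hcov2 hindep W hW
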